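/- arXiv:1707.07308 — 5 statements merged into one kernel-verified Lean document; each statement's English description precedes it below -/
import Mathlib

section
/- Let q ≥ 2 be a prime power and let F be a finite field with q elements. For non-negative integers n, m, r let R_q(n,m,r) denote the number of n × m matrices over F of rank r. Then for every integer a ≥ n + m one has ∑_{r ≥ 0} R_q(n,m,r)·(q;q)_{a−r} = q^{nm} · (q;q)_{a−n}(q;q)_{a−m} / (q;q)_{a−n−m}. -/
/-- The q-Pochhammer symbol `(q;q)_t = ∏_{i=1}^{t} (1 - q^i)`. -/
def qPoch (q : ℚ) (t : ℕ) : ℚ := ∏ i ∈ Finset.range t, (1 - q ^ (i + 1))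

/-- `R_q(n,m,r)`: the number of `n × m` matrices of rank `r` over the finite field `F`. -/
noncomputable def Rcount (F : Type) [Field F] [Fintype F] (n m r : ℕ) : ℕ :=
  Nat.card {A : Matrix (Fin n) (Fin m) F // A.rank = r}

/-!
Build a matrix column by column. If the first `m` columns span a subspace `W` of dimension `s`
in `V = Fⁿ`, then `q ^ s` choices of the next column keep the rank and `q ^ n - q ^ s` raise it
by one, and `q^s (q;q)_{a-s} + (q^n - q^s) (q;q)_{a-s-1} = (q^n - q^a) (q;q)_{a-s-1}` no longer
depends on `s`. Hence `S(m, a) = ∑_{g : Fin m → V} (q;q)_{a - rank g}` satisfies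
`S(m+1, a) = (q^n - q^a) S(m, a-1)`, and `q^n - q^{a-j} = q^n (1 - q^{a-n-j})` turns the
resulting product into the quotient of Pochhammer symbols.
-/

open Finset Module Submodule

lemma qPoch_succ (q : ℚ) (t : ℕ) : qPoch q (t + 1) = qPoch q t * (1 - q ^ (t + 1)) :=
  prod_range_succ _ _

lemma qPoch_ne_zero {q : ℚ} (hq : 1 < q) (t : ℕ) : qPoch q t ≠ 0 :=
  prod_ne_zero_iff.mpr fun i _ => sub_ne_zero.mpr (one_lt_pow₀ hq i.succ_ne_zero).ne

lemma pow_mul_qPoch_succ_add_sub_mul_qPoch (q : ℚ) (n s b : ℕ) :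
    q ^ s * qPoch q (b + 1) + (q ^ n - q ^ s) * qPoch q b
      = (q ^ n - q ^ (s + b + 1)) * qPoch q b := by
  rw [qPoch_succ]; ring

lemma finrank_sup_span_singleton_eq_ite {K V : Type*} [Field K] [AddCommGroup V] [Module K V]
    [Module.Finite K V] (W : Submodule K V) (v : V) [Decidable (v ∈ W)] :
    finrank K ↥(W ⊔ span K {v}) = if v ∈ W then finrank K W else finrank K W + 1 := by
  split_ifs with hv
  · rw [sup_eq_left.mpr ((span_singleton_le_iff_mem v W).mpr hv)]
  · exact finrank_sup_span_singleton hv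

section FiniteVectorSpace

variable {K V : Type*} [Field K] [Fintype K] [AddCommGroup V] [Module K V] [Fintype V]

lemma sum_ite_mem_submodule {R : Type*} [CommRing R] (W : Submodule K V) [DecidablePred (· ∈ W)]
    (x y : R) :
    ∑ v : V, (if v ∈ W then x else y)
      = (Fintype.card K : R) ^ finrank K W * x
        + ((Fintype.card K : R) ^ finrank K V - (Fintype.card K : R) ^ finrank K W) * y := by
  rw [sum_ite, sum_const, sum_const, nsmul_eq_mul, nsmul_eq_mul]
  have hW : (#{v : V | v ∈ W} : R) = (Fintype.card K : R) ^ finrank K W := by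
    rw [← Fintype.card_subtype, Module.card_eq_pow_finrank (K := K) (V := ↥W)]
    push_cast; rfl
  have hV : (#{v : V | v ∈ W} + #{v : V | v ∉ W} : R) = (Fintype.card K : R) ^ finrank K V := by
    rw [← Nat.cast_add, card_filter_add_card_filter_not, card_univ,
      Module.card_eq_pow_finrank (K := K)]
    push_cast; rfl
  linear_combination y * hV + (x - y) * hW

local notation "q" => (Fintype.card K : ℚ)

lemma sum_qPoch_sub_finrank_sup_span_singleton (W : Submodule K V) {a : ℕ}
    (ha : finrank K W < a) :
    ∑ v : V, qPoch q (a - finrank K ↥(W ⊔ span K {v}))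
      = (q ^ finrank K V - q ^ a) * qPoch q (a - 1 - finrank K W) := by
  classical
  simp only [finrank_sup_span_singleton_eq_ite, apply_ite (fun r => qPoch q (a - r)),
    sum_ite_mem_submodule]
  obtain ⟨b, rfl⟩ : ∃ b, a = finrank K W + b + 1 := ⟨a - 1 - finrank K W, by omega⟩
  convert pow_mul_qPoch_succ_add_sub_mul_qPoch q (finrank K V) (finrank K W) b using 4 <;> omega

lemma sum_qPoch_sub_finrank_span_range_succ (m : ℕ) {a : ℕ} (ha : finrank K V < a) :
    ∑ g : Fin (m + 1) → V, qPoch q (a - finrank K (span K (Set.range g)))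
      = (q ^ finrank K V - q ^ a)
        * ∑ g : Fin m → V, qPoch q (a - 1 - finrank K (span K (Set.range g))) := by
  rw [← (Fin.consEquiv fun _ => V).sum_comp, Fintype.sum_prod_type, sum_comm, mul_sum]
  refine sum_congr rfl fun g _ => ?_
  rw [← sum_qPoch_sub_finrank_sup_span_singleton _ ((finrank_le _).trans_lt ha)]
  refine sum_congr rfl fun v _ => ?_
  change qPoch q (a - finrank K (span K (Set.range (Fin.cons v g : Fin (m + 1) → V)))) = _
  rw [Fin.range_cons, span_insert, sup_comm]

lemma sum_qPoch_sub_finrank_span_range_mul (m : ℕ) {a : ℕ} (ha : finrank K V + m ≤ a) :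
    (∑ g : Fin m → V, qPoch q (a - finrank K (span K (Set.range g))))
        * qPoch q (a - finrank K V - m)
      = q ^ (finrank K V * m) * (qPoch q (a - finrank K V) * qPoch q (a - m)) := by
  induction m generalizing a with
  | zero =>
    rw [Fintype.sum_unique, Set.range_eq_empty, span_empty, finrank_bot]
    simp [mul_comm]
  | succ m ih =>
    set n := finrank K V
    obtain ⟨b, rfl⟩ : ∃ b, a = b + 1 := ⟨a - 1, by omega⟩
    have hsub : b + 1 - n = b - n + 1 := by omega
    rw [sum_qPoch_sub_finrank_span_range_succ m (by omega), mul_assoc,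
      show b + 1 - n - (m + 1) = b - n - m by omega, Nat.add_sub_cancel, ih (by omega),
      show b + 1 - (m + 1) = b - m by omega, hsub, qPoch_succ, ← hsub, mul_add_one n m, pow_add]
    have hpow : q ^ n * q ^ (b + 1 - n) = q ^ (b + 1) := by rw [← pow_add]; congr 1; omega
    linear_combination (q ^ (n * m) * qPoch q (b - n) * qPoch q (b - m)) * hpow

end FiniteVectorSpace

lemma sum_rank_eq_sum_finrank_span_range {ι κ K M : Type*} [Fintype ι] [Fintype κ]
    [DecidableEq ι] [DecidableEq κ] [Field K] [Fintype K] [AddCommMonoid M] (f : ℕ → M) :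
    ∑ A : Matrix ι κ K, f A.rank = ∑ g : κ → ι → K, f (finrank K (span K (Set.range g))) := by
  simp only [Matrix.rank_eq_finrank_span_cols]
  exact (Matrix.transposeAddEquiv ι κ K).sum_comp fun g => f (finrank K (span K (Set.range g)))

lemma sum_Rcount_mul {R : Type*} [CommSemiring R] (F : Type) [Field F] [Fintype F] (n m : ℕ)
    (f : ℕ → R) :
    ∑ r ∈ range (min n m + 1), (Rcount F n m r : R) * f r
      = ∑ A : Matrix (Fin n) (Fin m) F, f A.rank := by
  classical
  have hrank (A : Matrix (Fin n) (Fin m) F) : A.rank ∈ range (min n m + 1) := by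
    have := A.rank_le_card_height
    have := A.rank_le_card_width
    simp only [mem_range, Fintype.card_fin] at *
    omega
  rw [← sum_fiberwise_of_maps_to (fun A _ => hrank A)]
  refine sum_congr rfl fun r _ => ?_
  rw [sum_congr rfl fun A hA => congrArg f (mem_filter.mp hA).2, sum_const, nsmul_eq_mul, Rcount,
    Nat.card_eq_fintype_card, Fintype.card_subtype]

/-- Lemma `rnmrchu` (a q-analogue of the Chu–Vandermonde identity):
for `a ≥ n + m`, `∑_{r ≥ 0} R_q(n,m,r)·(q;q)_{a−r}
  = q^{nm}·(q;q)_{a−n}(q;q)_{a−m}/(q;q)_{a−n−m}`. -/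
theorem stmt_0 (F : Type) [Field F] [Fintype F] (q : ℕ) (hq : Fintype.card F = q)
    (n m a : ℕ) (ha : n + m ≤ a) :
    ∑ r ∈ Finset.range (min n m + 1), (Rcount F n m r : ℚ) * qPoch (q : ℚ) (a - r)
      = (q : ℚ) ^ (n * m) * (qPoch (q : ℚ) (a - n) * qPoch (q : ℚ) (a - m))
          / qPoch (q : ℚ) (a - n - m) := by
  subst hq
  have hq1 : (1 : ℚ) < Fintype.card F := by exact_mod_cast Fintype.one_lt_card
  rw [eq_div_iff (qPoch_ne_zero hq1 _), sum_Rcount_mul,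
    sum_rank_eq_sum_finrank_span_range fun r => qPoch _ (a - r)]
  simpa only [finrank_fin_fun] using
    sum_qPoch_sub_finrank_span_range_mul (K := F) (V := Fin n → F) m (by simpa using ha)
end

section
/- Let k ≥ 2 and let d be a positive divisor of the positive integer n. Then the rational function a_{k;n,d}(x) = ((x^d − 1)/(x^n − 1)) · ∑_{m : d ∣ m ∣ n} μ(m/d) · (−1)^{k(n − n/m)} · x^{(k−2)(n/2)(n/m − 1)} is a polynomial with integer coefficients; equivalently, (x^n − 1) divides (x^d − 1) · ∑_{m : d ∣ m ∣ n} μ(m/d) · (−1)^{k(n − n/m)} · x^{(k−2)(n/2)(n/m − 1)} in ℤ[x]. -/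
/-!
Work in `ℤ[X] ⧸ (X ^ n - 1)`, i.e. with an element `r` satisfying `r ^ n = 1`. Writing `m = d j`,
`N = n / d` and `q = n / m = N / j`, the summand of index `j` becomes `μ j` times a value that
depends only on the parity of `q`: `a = r ^ ((k - 2) n / 2)` if `q` is even, `b = ±1` if `q` is odd.
Möbius inversion of `g q = if Even q then a else b` gives `∑_{j ∣ N} μ j g (N / j) = b [N = 1] +
(a - b) [N = 2]`. For `N = 1` the factor `r ^ d - 1` vanishes; for `N = 2` the product is
`(s - 1) (s ^ (k - 2) - (-1) ^ (k - 2))` with `s = r ^ d`, and `s + 1` divides the second factor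
while `(s - 1) (s + 1) = s ^ 2 - 1 = 0`.
-/

open Polynomial ArithmeticFunction Finset
open scoped ArithmeticFunction.Moebius

theorem Nat.sum_divisors_filter_dvd {M : Type*} [AddCommMonoid M] {d n : ℕ} (f : ℕ → ℕ → M)
    (hdn : d ∣ n) :
    ∑ m ∈ n.divisors.filter (d ∣ ·), f (m / d) (n / m) =
      ∑ j ∈ (n / d).divisors, f j (n / d / j) := by
  obtain rfl | hd := eq_or_ne d 0
  · simp [Nat.eq_zero_of_zero_dvd hdn]
  obtain ⟨N, rfl⟩ := hdn
  have hd' : 0 < d := Nat.pos_of_ne_zero hd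
  rw [Nat.mul_div_cancel_left N hd']
  refine sum_nbij' (· / d) (d * ·) ?_ ?_ ?_ ?_ ?_
  · rintro _ hm
    obtain ⟨⟨hmn, hN⟩, j, rfl⟩ := by simpa using hm
    simp only [Nat.mul_div_cancel_left j hd', Nat.mem_divisors]
    exact ⟨Nat.dvd_of_mul_dvd_mul_left hd' hmn, hN.2⟩
  · intro j hj
    simp_all [mul_dvd_mul_left d]
  · rintro _ hm
    obtain ⟨-, j, rfl⟩ := by simpa using hm
    simp [Nat.mul_div_cancel_left j hd']
  · intro j _
    simp [Nat.mul_div_cancel_left j hd']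
  · rintro _ hm
    obtain ⟨-, j, rfl⟩ := by simpa using hm
    rw [Nat.mul_div_cancel_left j hd', Nat.mul_div_mul_left N j hd']

theorem sum_divisors_moebius_mul_ite_even {A : Type*} [CommRing A] (N : ℕ) (a b : A) :
    ∑ j ∈ N.divisors, (μ j : A) * (if Even (N / j) then a else b) =
      (if N = 1 then b else 0) + (if N = 2 then a - b else 0) := by
  obtain rfl | hN := eq_or_ne N 0
  · simp
  have hsum : ∀ n > 0, ∑ i ∈ n.divisors,
      ((if i = 1 then b else 0) + (if i = 2 then a - b else 0)) = if Even n then a else b := by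
    intro n hn
    rw [sum_add_distrib, sum_ite_eq', sum_ite_eq']
    by_cases he : Even n <;> simp [hn.ne', he, ← even_iff_two_dvd]
  rw [← sum_eq_iff_sum_smul_moebius_eq.mp hsum N (Nat.pos_of_ne_zero hN),
    Nat.sum_divisorsAntidiagonal (fun x y => μ x • if Even y then a else b)]
  simp only [zsmul_eq_mul]

theorem sub_one_mul_pow_sub_neg_one_pow {A : Type*} [CommRing A] {s : A} (hs : s ^ 2 = 1)
    (m : ℕ) : (s - 1) * (s ^ m - (-1) ^ m) = 0 := by
  obtain ⟨c, hc⟩ := sub_dvd_pow_sub_pow s (-1) m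
  have hs' : (s - 1) * (s - -1) = 0 := by linear_combination hs
  rw [hc, ← mul_assoc, hs', zero_mul]

theorem neg_one_pow_mul_pow_half_eq_ite {A : Type*} [CommRing A] {r : A} {n q : ℕ} (k : ℕ)
    (hr : r ^ n = 1) (hq : q ∣ n) :
    (-1) ^ (k * (n - q)) * r ^ ((k - 2) * (n * (q - 1)) / 2) =
      if Even q then r ^ ((k - 2) * (n / 2)) else (-1) ^ (k * (n - 1)) := by
  obtain rfl | hn := eq_or_ne n 0
  · simp
  have hqn : q ≤ n := Nat.le_of_dvd (Nat.pos_of_ne_zero hn) hq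
  have hq0 : q ≠ 0 := by rintro rfl; exact hn (Nat.eq_zero_of_zero_dvd hq)
  split_ifs with hqe
  · obtain ⟨h, rfl⟩ : Even n := even_iff_two_dvd.mpr (hqe.two_dvd.trans hq)
    obtain ⟨u, hu⟩ : ∃ u, q - 1 = 2 * u + 1 := ⟨q / 2 - 1, by rcases hqe with ⟨t, rfl⟩; omega⟩
    have hsign : (-1 : A) ^ (k * (h + h - q)) = 1 :=
      (Even.tsub ⟨h, rfl⟩ hqe |>.mul_left k).neg_one_pow
    rw [hsign, one_mul, hu, ← two_mul, Nat.mul_div_cancel_left h two_pos]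
    rw [show (k - 2) * (2 * h * (2 * u + 1)) = 2 * ((h + h) * ((k - 2) * u) + (k - 2) * h) by
        ring, Nat.mul_div_cancel_left _ two_pos, pow_add, pow_mul r (h + h), hr, one_pow, one_mul]
  · obtain ⟨u, hu⟩ : ∃ u, q - 1 = 2 * u := by
      obtain ⟨t, rfl⟩ := Nat.not_even_iff_odd.mp hqe
      exact ⟨t, by omega⟩
    have hexp : (k - 2) * (n * (q - 1)) / 2 = n * ((k - 2) * u) := by
      rw [hu, show (k - 2) * (n * (2 * u)) = 2 * (n * ((k - 2) * u)) by ring,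
        Nat.mul_div_cancel_left _ two_pos]
    have hsign : k * (n - 1) = k * (n - q) + 2 * (k * u) := by
      rw [show n - 1 = (n - q) + 2 * u by omega]; ring
    rw [hexp, pow_mul r n, hr, one_pow, mul_one, hsign, pow_add, (even_two_mul _).neg_one_pow,
      mul_one]

theorem sub_one_mul_sum_moebius_eq_zero {A : Type*} [CommRing A] {r : A} {k n d : ℕ} (hk : 2 ≤ k)
    (hdn : d ∣ n) (hr : r ^ n = 1) :
    (r ^ d - 1) * ∑ m ∈ n.divisors.filter (d ∣ ·),
      (μ (m / d) : A) * (-1) ^ (k * (n - n / m)) * r ^ ((k - 2) * (n * (n / m - 1)) / 2) = 0 := by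
  obtain rfl | hd := eq_or_ne d 0
  · simp
  simp_rw [mul_assoc]
  rw [Nat.sum_divisors_filter_dvd (fun j q => (μ j : A) *
      ((-1) ^ (k * (n - q)) * r ^ ((k - 2) * (n * (q - 1)) / 2))) hdn]
  obtain ⟨N, rfl⟩ := hdn
  rw [Nat.mul_div_cancel_left N (Nat.pos_of_ne_zero hd)]
  have hterm : ∀ j ∈ N.divisors, (μ j : A) *
      ((-1) ^ (k * (d * N - N / j)) * r ^ ((k - 2) * (d * N * (N / j - 1)) / 2)) =
      (μ j : A) * if Even (N / j) then r ^ ((k - 2) * (d * N / 2)) else (-1) ^ (k * (d * N - 1)) :=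
    fun j hj => by
      rw [neg_one_pow_mul_pow_half_eq_ite k hr
        ((Nat.div_dvd_of_dvd (Nat.dvd_of_mem_divisors hj)).mul_left d)]
  rw [sum_congr rfl hterm, sum_divisors_moebius_mul_ite_even]
  split_ifs with h1 h2 h2
  · omega
  · subst h1; rw [mul_one] at hr; rw [hr, sub_self, zero_mul]
  · subst h2
    obtain ⟨m, rfl⟩ := Nat.exists_eq_add_of_le hk
    have hs : (r ^ d) ^ 2 = 1 := by rw [← pow_mul, hr]
    have hsign : (-1 : A) ^ ((2 + m) * (d * 2 - 1)) = (-1) ^ m := by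
      rw [show (2 + m) * (d * 2 - 1) = m + 2 * ((2 + m) * (d - 1) + 1) by
        zify [Nat.one_le_iff_ne_zero.mpr hd, (by omega : 1 ≤ d * 2)]; ring]
      rw [pow_add, (even_two_mul _).neg_one_pow, mul_one]
    rw [zero_add, hsign, Nat.mul_div_cancel _ two_pos, Nat.add_sub_cancel_left, mul_comm m d,
      pow_mul]
    exact sub_one_mul_pow_sub_neg_one_pow hs m
  · simp

theorem stmt_3_general (k n d : ℕ) (hk : 2 ≤ k) (hdn : d ∣ n) :
    (X ^ n - 1 : ℤ[X]) ∣
      (X ^ d - 1) *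
        ∑ m ∈ n.divisors.filter (fun m => d ∣ m),
          C ((ArithmeticFunction.moebius (m / d) : ℤ) * (-1) ^ (k * (n - n / m))) *
            X ^ ((k - 2) * (n * (n / m - 1)) / 2) := by
  rw [← AdjoinRoot.mk_eq_zero]
  have hroot : AdjoinRoot.root (X ^ n - 1 : ℤ[X]) ^ n = 1 := by
    rw [← sub_eq_zero, ← AdjoinRoot.mk_X, ← map_pow, ← map_one (AdjoinRoot.mk _), ← map_sub,
      AdjoinRoot.mk_self]
  simpa [AdjoinRoot.mk_C, AdjoinRoot.mk_X] using sub_one_mul_sum_moebius_eq_zero hk hdn hroot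

/-- Lemma `lemand` (I), first claim: for `k ≥ 2` and `d ∣ n`,
`(x^n − 1)` divides `(x^d − 1) · ∑_{d ∣ m ∣ n} μ(m/d)·(−1)^{k(n − n/m)}·x^{(k−2)(n/2)(n/m − 1)}`
in `ℤ[x]`; equivalently `a_{k;n,d}(x)` is a polynomial with integer coefficients.
(Since `n(n/m − 1)` is always even, the exponent is written `((k−2)·(n·(n/m − 1)))/2`.) -/
theorem stmt_3 (k n d : ℕ) (hk : 2 ≤ k) (hn : 0 < n) (hd : 0 < d) (hdn : d ∣ n) :
    (X ^ n - 1 : ℤ[X]) ∣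
      (X ^ d - 1) *
        ∑ m ∈ n.divisors.filter (fun m => d ∣ m),
          C ((ArithmeticFunction.moebius (m / d) : ℤ) * (-1) ^ (k * (n - n / m))) *
            X ^ ((k - 2) * (n * (n / m - 1)) / 2) :=
  stmt_3_general k n d hk hdn
end

section
/- Let k ≥ 2 and let d be a positive divisor of the positive integer n with d ≠ n and 2d ≠ n. Then x^n − 1 divides ∑_{m : d ∣ m ∣ n} μ(m/d) · (−1)^{k(n − n/m)} · x^{(k−2)(n/2)(n/m − 1)} in ℤ[x]. Consequently the polynomial a_{k;n,d}(x) = ((x^d − 1)/(x^n − 1)) · ∑_{m : d ∣ m ∣ n} μ(m/d) · (−1)^{k(n − n/m)} · x^{(k−2)(n/2)(n/m − 1)} is divisible by x^d − 1 in ℤ[x]. -/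
/-!
Put `N = n / d` and index the sum by `c = n / m`, a divisor of `N`. Modulo `x ^ n - 1` the summand
attached to `c` depends only on the parity of `c`: replacing `c` by `c + 2` changes the exponent by
the multiple `n (k - 2)` of `n` and leaves the sign alone. The sum therefore becomes
`∑_{c ∣ N} μ(N / c) g(c mod 2)`, which vanishes unless `N ∈ {1, 2}`, i.e. unless `d = n` or
`2d = n`. The statement about `a_{k;n,d}` follows by cancelling `x ^ n - 1`.
-/

open Polynomial

/-- The polynomial `S_{k;n,d}(x) = ∑_{d ∣ m ∣ n} μ(m/d)·(−1)^{k(n − n/m)}·x^{(k−2)(n/2)(n/m − 1)}`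
in `ℤ[x]`.  (Since `n(n/m − 1)` is always even, the exponent is written
`((k−2)·(n·(n/m − 1)))/2`.) -/
noncomputable def sPoly (k n d : ℕ) : ℤ[X] :=
  ∑ m ∈ n.divisors.filter (fun m => d ∣ m),
    C ((ArithmeticFunction.moebius (m / d) : ℤ) * (-1) ^ (k * (n - n / m))) *
      X ^ ((k - 2) * (n * (n / m - 1)) / 2)

open ArithmeticFunction
open scoped ArithmeticFunction.Moebius

/- The parity indicator `c ↦ if Even c then a else b` is the divisor sum of
`b • δ₁ + (a - b) • δ₂`, so Möbius inversion returns the value of the latter at `N`. -/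
theorem sum_divisors_moebius_smul_ite_even_eq_zero {R : Type*} [AddCommGroup R] {N : ℕ}
    (hN1 : N ≠ 1) (hN2 : N ≠ 2) (a b : R) :
    ∑ e ∈ N.divisors, μ e • (if Even (N / e) then a else b) = 0 := by
  rcases N.eq_zero_or_pos with rfl | hN
  · simp
  have hsum : ∀ c > 0, ∑ i ∈ c.divisors,
      ((if i = 1 then b else 0) + (if i = 2 then a - b else 0)) = if Even c then a else b := by
    intro c hc
    rw [Finset.sum_add_distrib, Finset.sum_ite_eq', Finset.sum_ite_eq']
    simp only [Nat.mem_divisors, one_dvd, ne_eq, hc.ne', not_false_eq_true, and_true, if_true,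
      even_iff_two_dvd]
    split_ifs <;> abel
  have := sum_eq_iff_sum_smul_moebius_eq.mp hsum N hN
  rw [Nat.sum_divisorsAntidiagonal (fun e c => μ e • if Even c then a else b)] at this
  simpa [hN1, hN2] using this

/-- The summand of `sPoly k n d` indexed by the divisor `m` with `n / m = c`, without its
Möbius coefficient `μ (m / d)`. -/
noncomputable def sPolyTerm (k n c : ℕ) : ℤ[X] :=
  (-1) ^ (k * (n - c)) * X ^ ((k - 2) * (n * (c - 1)) / 2)

theorem sPoly_eq_sum_divisors {k n d : ℕ} (hd : 0 < d) (hdn : d ∣ n) :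
    sPoly k n d = ∑ e ∈ (n / d).divisors, μ e • sPolyTerm k n (n / d / e) := by
  obtain ⟨N, rfl⟩ := hdn
  rw [Nat.mul_div_cancel_left N hd]
  refine Finset.sum_nbij' (fun m => m / d) (fun e => d * e) ?_ ?_ ?_ ?_ ?_
  · intro m hm
    simp only [Finset.mem_filter, Nat.mem_divisors] at hm
    obtain ⟨⟨hmn, hN⟩, e, rfl⟩ := hm
    rw [Nat.mul_div_cancel_left e hd]
    exact Nat.mem_divisors.mpr ⟨Nat.dvd_of_mul_dvd_mul_left hd hmn, right_ne_zero_of_mul hN⟩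
  · intro e he
    simp only [Nat.mem_divisors] at he
    simp only [Finset.mem_filter, Nat.mem_divisors]
    exact ⟨⟨mul_dvd_mul_left d he.1, mul_ne_zero hd.ne' he.2⟩, dvd_mul_right d e⟩
  · intro m hm
    simp only [Finset.mem_filter] at hm
    exact Nat.mul_div_cancel' hm.2
  · intro e _
    exact Nat.mul_div_cancel_left e hd
  · intro m hm
    simp only [Finset.mem_filter] at hm
    obtain ⟨e, rfl⟩ := hm.2
    rw [Nat.mul_div_cancel_left e hd, Nat.mul_div_mul_left N e hd, sPolyTerm, zsmul_eq_mul]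
    simp [mul_assoc]

theorem X_pow_sub_one_dvd_sPolyTerm_add_two_mul_sub (k : ℕ) {n c j : ℕ} (hc : 1 ≤ c)
    (hcn : c + 2 * j ≤ n) :
    (X ^ n - 1 : ℤ[X]) ∣ sPolyTerm k n (c + 2 * j) - sPolyTerm k n c := by
  have hexp : (k - 2) * (n * (c + 2 * j - 1)) / 2 =
      (k - 2) * (n * (c - 1)) / 2 + n * ((k - 2) * j) := by
    rw [show c + 2 * j - 1 = (c - 1) + 2 * j by omega, ← Nat.add_mul_div_left _ _ two_pos]
    ring_nf
  have hsign : (-1 : ℤ[X]) ^ (k * (n - c)) = (-1) ^ (k * (n - (c + 2 * j))) := by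
    rw [show n - c = n - (c + 2 * j) + 2 * j by omega, mul_add, pow_add,
      Even.neg_one_pow (⟨k * j, by ring⟩ : Even (k * (2 * j))), mul_one]
  have hdiff : sPolyTerm k n (c + 2 * j) - sPolyTerm k n c =
      (-1) ^ (k * (n - c)) * X ^ ((k - 2) * (n * (c - 1)) / 2) *
        ((X ^ n) ^ ((k - 2) * j) - 1) := by
    rw [sPolyTerm, sPolyTerm, hexp, hsign, pow_add, pow_mul]
    ring
  rw [hdiff]
  exact dvd_mul_of_dvd_right (sub_one_dvd_pow_sub_one _ _) _

theorem mk_sPolyTerm_eq_ite (k : ℕ) {n c : ℕ} (hc : c ∈ n.divisors) :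
    AdjoinRoot.mk (X ^ n - 1) (sPolyTerm k n c) =
      if Even c then AdjoinRoot.mk (X ^ n - 1) (sPolyTerm k n 2)
      else AdjoinRoot.mk (X ^ n - 1) (sPolyTerm k n 1) := by
  have hcn : c ≤ n := Nat.divisor_le hc
  have hc0 : 0 < c := Nat.pos_of_mem_divisors hc
  split_ifs with heven
  · obtain ⟨j, rfl⟩ : ∃ j, c = 2 + 2 * j := ⟨c / 2 - 1, by grind⟩
    exact AdjoinRoot.mk_eq_mk.mpr (X_pow_sub_one_dvd_sPolyTerm_add_two_mul_sub k one_le_two hcn)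
  · obtain ⟨j, rfl⟩ : ∃ j, c = 1 + 2 * j := ⟨c / 2, by grind⟩
    exact AdjoinRoot.mk_eq_mk.mpr (X_pow_sub_one_dvd_sPolyTerm_add_two_mul_sub k le_rfl hcn)

theorem X_pow_sub_one_dvd_sPoly (k : ℕ) {n d : ℕ} (hd : 0 < d) (hdn : d ∣ n) (h1 : d ≠ n)
    (h2 : 2 * d ≠ n) : (X ^ n - 1 : ℤ[X]) ∣ sPoly k n d := by
  obtain ⟨N, rfl⟩ := hdn
  have hN1 : N ≠ 1 := by rintro rfl; simp at h1
  have hN2 : N ≠ 2 := by rintro rfl; simp [mul_comm] at h2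
  have hquot : ∀ e ∈ N.divisors, N / e ∈ (d * N).divisors := fun e he =>
    have hN0 : N ≠ 0 := (Nat.mem_divisors.mp he).2
    Nat.divisors_subset_of_dvd (mul_ne_zero hd.ne' hN0) (dvd_mul_left N d)
      (Nat.mem_divisors.mpr ⟨Nat.div_dvd_of_dvd (Nat.dvd_of_mem_divisors he), hN0⟩)
  rw [← AdjoinRoot.mk_eq_zero, sPoly_eq_sum_divisors hd (dvd_mul_right d N),
    Nat.mul_div_cancel_left N hd, map_sum,
    Finset.sum_congr rfl fun e he => by rw [map_zsmul, mk_sPolyTerm_eq_ite k (hquot e he)]]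
  exact sum_divisors_moebius_smul_ite_even_eq_zero hN1 hN2 _ _

theorem stmt_4_general (k n d : ℕ) (hn : 0 < n) (hd : 0 < d) (hdn : d ∣ n)
    (h1 : d ≠ n) (h2 : 2 * d ≠ n) :
    ((X ^ n - 1 : ℤ[X]) ∣ sPoly k n d) ∧
      ∀ a : ℤ[X], (X ^ n - 1) * a = (X ^ d - 1) * sPoly k n d → (X ^ d - 1) ∣ a := by
  obtain ⟨q, hq⟩ := X_pow_sub_one_dvd_sPoly k hd hdn h1 h2
  refine ⟨⟨q, hq⟩, fun a ha => ⟨q, mul_left_cancel₀ (X_pow_sub_C_ne_zero hn 1) ?_⟩⟩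
  rw [map_one, ha, hq]
  ring

/-- Lemma `lemand` (I), divisibility claim: for `k ≥ 2`, `d ∣ n` with `d ≠ n` and `2d ≠ n`,
`x^n − 1` divides `S_{k;n,d}(x)` in `ℤ[x]`; consequently the polynomial
`a_{k;n,d}(x) = ((x^d − 1)/(x^n − 1))·S_{k;n,d}(x)` is divisible by `x^d − 1` in `ℤ[x]`. -/
theorem stmt_4 (k n d : ℕ) (hk : 2 ≤ k) (hn : 0 < n) (hd : 0 < d) (hdn : d ∣ n)
    (h1 : d ≠ n) (h2 : 2 * d ≠ n) :
    ((X ^ n - 1 : ℤ[X]) ∣ sPoly k n d) ∧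
      ∀ a : ℤ[X], (X ^ n - 1) * a = (X ^ d - 1) * sPoly k n d → (X ^ d - 1) ∣ a :=
  stmt_4_general k n d hn hd hdn h1 h2
end

section
/- Let k > 2 and let d be a positive divisor of the positive integer n. Then the polynomial a_{k;n,d}(x) has degree (n(k−2) − 2d)(n − d)/(2d) and its leading coefficient equals (−1)^{k(n − n/d)}. -/
open Polynomial

namespace Polynomial

section SumCMulXPow

variable {R ι : Type*} [Semiring R] {s : Finset ι} {c : ι → R} {e : ι → ℕ} {i : ι}

theorem coeff_sum_C_mul_X_pow_of_forall_lt (hi : i ∈ s) (he : ∀ j ∈ s, j ≠ i → e j < e i) :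
    (∑ j ∈ s, C (c j) * X ^ e j).coeff (e i) = c i := by
  rw [finsetSum_coeff, Finset.sum_eq_single_of_mem i hi fun j hj hji => ?_]
  · simp
  · rw [coeff_C_mul_X_pow, if_neg (he j hj hji).ne']

theorem natDegree_sum_C_mul_X_pow_of_forall_lt (hi : i ∈ s) (hc : c i ≠ 0)
    (he : ∀ j ∈ s, j ≠ i → e j < e i) :
    (∑ j ∈ s, C (c j) * X ^ e j).natDegree = e i := by
  refine natDegree_eq_of_le_of_coeff_ne_zero ?_ (by rwa [coeff_sum_C_mul_X_pow_of_forall_lt hi he])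
  refine natDegree_sum_le_of_forall_le _ _ fun j hj => (natDegree_C_mul_X_pow_le _ _).trans ?_
  obtain rfl | hji := eq_or_ne j i
  exacts [le_rfl, (he j hj hji).le]

theorem leadingCoeff_sum_C_mul_X_pow_of_forall_lt (hi : i ∈ s) (hc : c i ≠ 0)
    (he : ∀ j ∈ s, j ≠ i → e j < e i) :
    (∑ j ∈ s, C (c j) * X ^ e j).leadingCoeff = c i := by
  rw [leadingCoeff, natDegree_sum_C_mul_X_pow_of_forall_lt hi hc he,
    coeff_sum_C_mul_X_pow_of_forall_lt hi he]

end SumCMulXPow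

section MonicMulEq

variable {R : Type*} [Semiring R] {f g p q : R[X]}

theorem leadingCoeff_eq_of_monic_mul_eq (hf : f.Monic) (hg : g.Monic) (h : f * p = g * q) :
    p.leadingCoeff = q.leadingCoeff := by
  rw [← leadingCoeff_monic_mul hf, h, leadingCoeff_monic_mul hg]

theorem natDegree_add_eq_of_monic_mul_eq (hf : f.Monic) (hg : g.Monic) (hq : q ≠ 0)
    (h : f * p = g * q) : f.natDegree + p.natDegree = g.natDegree + q.natDegree := by
  have hp : p ≠ 0 := by
    rw [← leadingCoeff_ne_zero, leadingCoeff_eq_of_monic_mul_eq hf hg h]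
    exact leadingCoeff_ne_zero.mpr hq
  rw [← hf.natDegree_mul' hp, ← hg.natDegree_mul' hq, h]

end MonicMulEq

end Polynomial

theorem two_dvd_mul_pred_of_dvd {n s : ℕ} (hs : s ∣ n) : 2 ∣ n * (s - 1) := by
  rcases Nat.even_or_odd n with hn | hn
  · exact hn.two_dvd.mul_right _
  · exact (Nat.Odd.sub_odd (hn.of_dvd_nat hs) odd_one).two_dvd.mul_left _

theorem mul_mul_pred_div_two_lt {k n s t : ℕ} (hk : 2 < k) (hn : 0 < n) (hs : 0 < s)
    (hst : s < t) (ht : t ∣ n) :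
    (k - 2) * (n * (s - 1)) / 2 < (k - 2) * (n * (t - 1)) / 2 :=
  Nat.div_lt_div_of_lt_of_dvd ((two_dvd_mul_pred_of_dvd ht).mul_left _) <|
    Nat.mul_lt_mul_of_pos_left (Nat.mul_lt_mul_of_pos_left (by omega) hn) (by omega)

theorem eq_div_of_add_eq_add_mul_mul_pred_div_two {k n d x : ℕ} (hk : 2 < k) (hn : 0 < n)
    (hdn : d ∣ n) (h : n + x = d + (k - 2) * (n * (n / d - 1)) / 2) :
    x = (n * (k - 2) - 2 * d) * (n - d) / (2 * d) := by
  obtain ⟨t, rfl⟩ := hdn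
  have hd : 0 < d := Nat.pos_of_mul_pos_right hn
  have ht : 0 < t := Nat.pos_of_mul_pos_left hn
  obtain ⟨W, hW⟩ := two_dvd_mul_pred_of_dvd (dvd_mul_left t d)
  rw [Nat.mul_div_cancel_left t hd, hW, mul_left_comm, Nat.mul_div_cancel_left _ two_pos] at h
  obtain rfl | ht1 := Nat.eq_or_lt_of_le ht
  · simp_all
  refine (Nat.div_eq_of_eq_mul_left (by positivity) ?_).symm
  have hdt : d ≤ d * t := Nat.le_mul_of_pos_right d ht
  have h2d : 2 * d ≤ d * t * (k - 2) :=
    calc 2 * d ≤ d * t := by rw [mul_comm]; exact Nat.mul_le_mul_left d ht1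
      _ ≤ d * t * (k - 2) := Nat.le_mul_of_pos_right _ (by omega)
  zify [hk.le, ht, hdt, h2d] at h hW ⊢
  linear_combination (d : ℤ) * ((k : ℤ) - 2) * hW - 2 * (d : ℤ) * h

section sPoly

variable {k n d : ℕ}

theorem sPoly_exponent_lt (hk : 2 < k) (hn : 0 < n) (hdn : d ∣ n) {m : ℕ}
    (hm : m ∈ n.divisors.filter (fun m => d ∣ m)) (hmd : m ≠ d) :
    (k - 2) * (n * (n / m - 1)) / 2 < (k - 2) * (n * (n / d - 1)) / 2 := by
  obtain ⟨⟨hmn, -⟩, hdm⟩ := by simpa using hm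
  have hm0 : 0 < m := Nat.pos_of_dvd_of_pos hmn hn
  have hdm' : d < m := (Nat.le_of_dvd hm0 hdm).lt_of_ne' hmd
  exact mul_mul_pred_div_two_lt hk hn (Nat.div_pos (Nat.le_of_dvd hn hmn) hm0)
    ((Nat.div_lt_div_left hn.ne' hmn hdn).mpr hdm') (Nat.div_dvd_of_dvd hdn)

theorem self_mem_divisors_filter_dvd (hn : 0 < n) (hdn : d ∣ n) :
    d ∈ n.divisors.filter (fun m => d ∣ m) := by
  simp [hdn, hn.ne']

theorem sPoly_top_coeff_ne_zero (hn : 0 < n) (hdn : d ∣ n) :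
    (ArithmeticFunction.moebius (d / d) : ℤ) * (-1) ^ (k * (n - n / d)) ≠ 0 := by
  simp [Nat.div_self (Nat.pos_of_dvd_of_pos hdn hn)]

theorem sPoly_natDegree (hk : 2 < k) (hn : 0 < n) (hdn : d ∣ n) :
    (sPoly k n d).natDegree = (k - 2) * (n * (n / d - 1)) / 2 :=
  natDegree_sum_C_mul_X_pow_of_forall_lt (self_mem_divisors_filter_dvd hn hdn)
    (sPoly_top_coeff_ne_zero hn hdn) fun _ hm hmd => sPoly_exponent_lt hk hn hdn hm hmd

theorem sPoly_leadingCoeff (hk : 2 < k) (hn : 0 < n) (hdn : d ∣ n) :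
    (sPoly k n d).leadingCoeff = (-1) ^ (k * (n - n / d)) := by
  calc (sPoly k n d).leadingCoeff
      = (ArithmeticFunction.moebius (d / d) : ℤ) * (-1) ^ (k * (n - n / d)) :=
        leadingCoeff_sum_C_mul_X_pow_of_forall_lt (self_mem_divisors_filter_dvd hn hdn)
          (sPoly_top_coeff_ne_zero hn hdn) fun _ hm hmd => sPoly_exponent_lt hk hn hdn hm hmd
    _ = (-1) ^ (k * (n - n / d)) := by simp [Nat.div_self (Nat.pos_of_dvd_of_pos hdn hn)]

end sPoly

theorem stmt_6_general (k n d : ℕ) (hk : 2 < k) (hn : 0 < n) (hdn : d ∣ n) :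
    ∀ p : ℤ[X], (X ^ n - 1) * p = (X ^ d - 1) * sPoly k n d →
      p.natDegree = (n * (k - 2) - 2 * d) * (n - d) / (2 * d) ∧
        p.leadingCoeff = (-1) ^ (k * (n - n / d)) := by
  intro p hp
  have hd : 0 < d := Nat.pos_of_dvd_of_pos hdn hn
  have hXn : (X ^ n - 1 : ℤ[X]).Monic := leadingCoeff_X_pow_sub_one hn
  have hXd : (X ^ d - 1 : ℤ[X]).Monic := leadingCoeff_X_pow_sub_one hd
  have hS : sPoly k n d ≠ 0 := by
    rw [← leadingCoeff_ne_zero, sPoly_leadingCoeff hk hn hdn]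
    exact pow_ne_zero _ (by norm_num)
  have hdeg (m : ℕ) : (X ^ m - 1 : ℤ[X]).natDegree = m := by
    simpa using natDegree_X_pow_sub_C (n := m) (r := (1 : ℤ))
  have hdegp := natDegree_add_eq_of_monic_mul_eq hXn hXd hS hp
  rw [hdeg, hdeg, sPoly_natDegree hk hn hdn] at hdegp
  exact ⟨eq_div_of_add_eq_add_mul_mul_pred_div_two hk hn hdn hdegp,
    (leadingCoeff_eq_of_monic_mul_eq hXn hXd hp).trans (sPoly_leadingCoeff hk hn hdn)⟩

/-- Lemma `lemand` (II), case `k > 2`: the polynomial `a_{k;n,d}(x)`, i.e. the (unique)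
polynomial `p` with `(x^n − 1)·p = (x^d − 1)·S_{k;n,d}(x)`, has degree
`(n(k−2) − 2d)(n − d)/(2d)` and leading coefficient `(−1)^{k(n − n/d)}`. -/
theorem stmt_6 (k n d : ℕ) (hk : 2 < k) (hn : 0 < n) (hd : 0 < d) (hdn : d ∣ n) :
    ∀ p : ℤ[X], (X ^ n - 1) * p = (X ^ d - 1) * sPoly k n d →
      p.natDegree = (n * (k - 2) - 2 * d) * (n - d) / (2 * d) ∧
        p.leadingCoeff = (-1) ^ (k * (n - n / d)) :=
  stmt_6_general k n d hk hn hdn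
end

section
/- Let q be a prime power, F a finite field with q elements, n ≥ 1, and let ψ_0 : F → ℂ^× be a nontrivial additive character. Then ∑_{X ∈ M_n(F)} \overline{ψ_0}( tr X ) · (q;q)_{2n − 1 − rk X} = (−1)^n · q^{n^2} · q^{n(n−1)/2} · (q;q)_{n−1}. -/
/-!
Split `(q;q)_{2n-1-rk X} = (q;q)_{n-1} ∏_{i < n - rk X} (1 - q^n q^i)` and expand the product by
the `q`-binomial theorem in the functions `m ↦ ∏_{i<s} (q^m - q^i)`, which count linearly
independent `s`-tuples in an `m`-dimensional space. With `m = dim ker X`, the sum of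
`ψ̄(tr X) ∏_{i<s} (q^m - q^i)` over `X` becomes, after exchanging the sums, a sum over independent
`s`-tuples `v` of the character sums of `ψ̄ ∘ tr` over the matrices killing `span v`. The trace is a
nonzero linear form on that space unless `v` spans `Fⁿ`, so only `s = n` survives, and it
contributes `|GL_n(F)| = (-1)^n q^{n(n-1)/2} (q;q)_n`.
-/

/-- The q-Pochhammer symbol `(q;q)_t = ∏_{i=1}^{t} (1 - q^i)` in `ℂ`. -/
def qPochC (q : ℂ) (t : ℕ) : ℂ := ∏ i ∈ Finset.range t, (1 - q ^ (i + 1))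

open Finset

/-- The `q`-analogue of `Nat.descFactorial`: for `q = #F` it counts the linearly independent
`s`-tuples in an `m`-dimensional `F`-space (`card_linearIndependent`). -/
def qDescFactorial (q : ℂ) (m s : ℕ) : ℂ := ∏ i ∈ range s, (q ^ m - q ^ i)

section QSeries

variable {q : ℂ}

lemma qDescFactorial_succ_right (m s : ℕ) :
    qDescFactorial q m (s + 1) = qDescFactorial q m s * (q ^ m - q ^ s) :=
  prod_range_succ _ _

lemma qPochC_succ (s : ℕ) : qPochC q (s + 1) = qPochC q s * (1 - q ^ (s + 1)) :=
  prod_range_succ _ _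

lemma qDescFactorial_succ_succ (m s : ℕ) :
    qDescFactorial q (m + 1) (s + 1) = (q ^ (m + 1) - 1) * q ^ s * qDescFactorial q m s := by
  have h : ∀ i, q ^ (m + 1) - q ^ (i + 1) = q * (q ^ m - q ^ i) := fun i => by ring
  rw [qDescFactorial, prod_range_succ', prod_congr rfl fun i _ => h i, prod_mul_distrib,
    prod_const, card_range, qDescFactorial]
  ring

lemma qDescFactorial_pascal (m s : ℕ) :
    qDescFactorial q (m + 1) (s + 1)
      = qDescFactorial q m (s + 1) - q ^ m * (1 - q ^ (s + 1)) * qDescFactorial q m s := by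
  rw [qDescFactorial_succ_succ, qDescFactorial_succ_right]
  ring

lemma qDescFactorial_eq_zero_of_lt {m s : ℕ} (h : m < s) : qDescFactorial q m s = 0 :=
  prod_eq_zero (mem_range.2 h) (sub_self _)

lemma qDescFactorial_self (s : ℕ) :
    qDescFactorial q s s = (-1) ^ s * q ^ (s * (s - 1) / 2) * qPochC q s := by
  induction s with
  | zero => simp [qDescFactorial, qPochC]
  | succ s ih =>
    have h : (s + 1) * (s + 1 - 1) / 2 = s * (s - 1) / 2 + s := by
      rw [← Nat.choose_two_right, ← Nat.choose_two_right, Nat.choose_succ_succ,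
        Nat.choose_one_right, add_comm]
    rw [qDescFactorial_succ_succ, ih, h, qPochC_succ]
    ring

lemma qPochC_ne_zero (hq : ∀ k, q ^ (k + 1) ≠ 1) (s : ℕ) : qPochC q s ≠ 0 :=
  prod_ne_zero_iff.2 fun k _ => sub_ne_zero.2 (hq k).symm

/-- The `q`-binomial theorem, in the normalisation
`qDescFactorial q m s / qPochC q s = (-1) ^ s * q ^ (s * (s - 1) / 2) * [m, s]_q`. -/
theorem prod_one_sub_mul_pow_eq_sum (hq : ∀ k, q ^ (k + 1) ≠ 1) (x : ℂ) (m : ℕ) :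
    ∏ i ∈ range m, (1 - x * q ^ i)
      = ∑ s ∈ range (m + 1), x ^ s * qDescFactorial q m s / qPochC q s := by
  induction m with
  | zero => simp [qDescFactorial, qPochC]
  | succ m ih =>
    set c : ℕ → ℕ → ℂ := fun m s => x ^ s * qDescFactorial q m s / qPochC q s with hc
    have hstep : ∀ s, c (m + 1) (s + 1) = c m (s + 1) - x * q ^ m * c m s := fun s => by
      have hP := qPochC_ne_zero hq s
      have hs : 1 - q ^ (s + 1) ≠ 0 := sub_ne_zero.2 (hq s).symm
      simp only [hc, qDescFactorial_pascal, qPochC_succ]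
      field_simp
      ring
    have hshift := sum_range_succ' (c m) (m + 1)
    have hlast : c m (m + 1) = 0 := by
      simp only [hc, qDescFactorial_eq_zero_of_lt (Nat.lt_succ_self m), mul_zero, zero_div]
    have hfirst : ∀ m, c m 0 = 1 := fun m => by simp [hc, qDescFactorial, qPochC]
    rw [sum_range_succ, hlast, add_zero, hfirst] at hshift
    rw [prod_range_succ, ih]
    change (∑ s ∈ range (m + 1), c m s) * _ = ∑ s ∈ range (m + 1 + 1), c (m + 1) s
    rw [sum_range_succ' (c (m + 1)), sum_congr rfl fun s _ => hstep s,
      sum_sub_distrib, ← mul_sum, hfirst]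
    linear_combination hshift

theorem qPochC_add_eq_sum (hq : ∀ k, q ^ (k + 1) ≠ 1) (a : ℕ) {m N : ℕ} (hm : m ≤ N) :
    qPochC q (a + m)
      = qPochC q a *
          ∑ s ∈ range (N + 1), (q ^ (a + 1)) ^ s * qDescFactorial q m s / qPochC q s := by
  have hfactor : ∀ i, 1 - q ^ (a + i + 1) = 1 - q ^ (a + 1) * q ^ i := fun i => by ring
  rw [qPochC, prod_range_add, ← qPochC, prod_congr rfl fun i _ => hfactor i,
    prod_one_sub_mul_pow_eq_sum hq]
  congr 1
  refine sum_subset (range_subset_range.2 (by omega)) fun s _ hs => ?_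
  rw [qDescFactorial_eq_zero_of_lt (by simpa using hs), mul_zero, zero_div]

end QSeries

section Linear

variable {F : Type*} [Field F]

theorem AddChar.sum_apply_linearMap_eq_zero {M : Type*} [AddCommGroup M] [Module F M]
    [Fintype M] {ψ : AddChar F ℂ} (hψ : ψ ≠ 1) {f : M →ₗ[F] F} (hf : f ≠ 0) :
    ∑ x, ψ (f x) = 0 := by
  refine AddChar.sum_eq_zero_of_ne_one (ψ := ψ.compAddMonoidHom f.toAddMonoidHom) fun h => hψ ?_
  ext a
  obtain ⟨x, rfl⟩ := LinearMap.surjective_of_ne_zero hf a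
  simpa using DFunLike.congr_fun h x

theorem LinearIndependent.span_range_eq_top_iff {V : Type*} [AddCommGroup V] [Module F V]
    [FiniteDimensional F V] {κ : Type*} [Fintype κ] {v : κ → V} (hv : LinearIndependent F v) :
    Submodule.span F (Set.range v) = ⊤ ↔ Fintype.card κ = Module.finrank F V := by
  refine ⟨fun h => ?_, hv.span_eq_top_of_card_eq_finrank'⟩
  rw [← finrank_span_eq_card hv, h, finrank_top]

open scoped Classical in
theorem natCast_card_linearIndependent_mem [Fintype F] {V : Type*} [AddCommGroup V] [Module F V]
    [Fintype V] (W : Submodule F V) (s : ℕ) :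
    ((#{v : Fin s → V | LinearIndependent F v ∧ ∀ j, v j ∈ W} : ℕ) : ℂ)
      = qDescFactorial (Fintype.card F) (Module.finrank F W) s := by
  have e : {v : Fin s → V // LinearIndependent F v ∧ ∀ j, v j ∈ W}
      ≃ {w : Fin s → W // LinearIndependent F w} :=
    { toFun := fun v => ⟨fun j => ⟨v.1 j, v.2.2 j⟩,
        (W.subtype.linearIndependent_iff (Submodule.ker_subtype W)).1 v.2.1⟩
      invFun := fun w => ⟨W.subtype ∘ w.1,
        (W.subtype.linearIndependent_iff (Submodule.ker_subtype W)).2 w.2, fun j => (w.1 j).2⟩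
      left_inv := fun v => rfl
      right_inv := fun w => rfl }
  rw [← Fintype.card_subtype, Fintype.card_congr e, ← Nat.card_eq_fintype_card]
  rcases le_or_gt s (Module.finrank F W) with hs | hs
  · rw [card_linearIndependent hs, Nat.cast_prod, qDescFactorial, ← Fin.prod_univ_eq_prod_range]
    refine prod_congr rfl fun i _ => ?_
    rw [Nat.cast_sub (Nat.pow_le_pow_right Fintype.card_pos (by omega))]
    push_cast
    rfl
  · rw [qDescFactorial_eq_zero_of_lt hs, Nat.cast_eq_zero, Nat.card_eq_zero]
    left
    exact ⟨fun w => hs.not_ge (by simpa using w.2.fintype_card_le_finrank)⟩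

end Linear

section Matrix

open Matrix

variable {F : Type*} [Field F] {ι : Type*} [Fintype ι]

def matricesVanishingOn (W : Submodule F (ι → F)) : Submodule F (Matrix ι ι F) where
  carrier := {X | ∀ w ∈ W, X *ᵥ w = 0}
  add_mem' {X Y} hX hY w hw := by rw [Matrix.add_mulVec, hX w hw, hY w hw, add_zero]
  zero_mem' w _ := Matrix.zero_mulVec w
  smul_mem' c X hX w hw := by rw [Matrix.smul_mulVec, hX w hw, smul_zero]

theorem mem_matricesVanishingOn {W : Submodule F (ι → F)} {X : Matrix ι ι F} :
    X ∈ matricesVanishingOn W ↔ ∀ w ∈ W, X *ᵥ w = 0 :=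
  Iff.rfl

theorem mem_matricesVanishingOn_span_range {κ : Type*} {v : κ → ι → F} {X : Matrix ι ι F} :
    X ∈ matricesVanishingOn (Submodule.span F (Set.range v)) ↔ ∀ j, X *ᵥ v j = 0 := by
  change Submodule.span F (Set.range v) ≤ LinearMap.ker X.mulVecLin ↔ _
  rw [Submodule.span_le, Set.range_subset_iff]
  rfl

theorem matricesVanishingOn_top : matricesVanishingOn (⊤ : Submodule F (ι → F)) = ⊥ := by
  classical
  refine (Submodule.eq_bot_iff _).2 fun X hX => ?_
  exact toLin'.injective (LinearMap.ext fun w => by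
    simpa using mem_matricesVanishingOn.1 hX w trivial)

theorem exists_mem_matricesVanishingOn_trace_ne_zero {W : Submodule F (ι → F)} (hW : W ≠ ⊤) :
    ∃ X ∈ matricesVanishingOn W, X.trace ≠ 0 := by
  classical
  obtain ⟨f, hf, hWf⟩ := W.exists_le_ker_of_lt_top hW.lt_top
  obtain ⟨u, hu⟩ : ∃ u, f u ≠ 0 := by
    by_contra! h
    exact hf (LinearMap.ext h)
  refine ⟨LinearMap.toMatrix' (f.smulRight u), mem_matricesVanishingOn.2 fun w hw => ?_, ?_⟩
  · rw [LinearMap.toMatrix'_mulVec, LinearMap.smulRight_apply, hWf hw, zero_smul]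
  · rwa [← Matrix.trace_toLin'_eq, Matrix.toLin'_toMatrix', LinearMap.trace_smulRight]

open scoped Classical in
theorem sum_addChar_trace_matricesVanishingOn [DecidableEq ι] [Fintype F] {ψ : AddChar F ℂ}
    (hψ : ψ ≠ 1) (W : Submodule F (ι → F)) :
    ∑ X with X ∈ matricesVanishingOn W, ψ X.trace = if W = ⊤ then 1 else 0 := by
  split_ifs with hW
  · subst hW
    simp only [matricesVanishingOn_top, Submodule.mem_bot, filter_eq', mem_univ, if_true,
      sum_singleton, trace_zero, AddChar.map_zero_eq_one]
  · obtain ⟨X₀, hX₀, htr⟩ := exists_mem_matricesVanishingOn_trace_ne_zero hW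
    rw [Finset.sum_subtype (p := (· ∈ matricesVanishingOn W)) _ fun X => by simp]
    refine AddChar.sum_apply_linearMap_eq_zero hψ
      (f := (Matrix.traceLinearMap ι F F).comp (matricesVanishingOn W).subtype) fun h => htr ?_
    simpa using LinearMap.congr_fun h ⟨X₀, hX₀⟩

theorem Matrix.finrank_ker_mulVecLin (X : Matrix ι ι F) :
    Module.finrank F (LinearMap.ker X.mulVecLin) = Fintype.card ι - X.rank := by
  have h := LinearMap.finrank_range_add_finrank_ker X.mulVecLin
  rw [Module.finrank_fintype_fun_eq_card, ← Matrix.rank] at h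
  omega

open scoped Classical in
theorem sum_addChar_trace_mul_qDescFactorial [DecidableEq ι] [Fintype F] {ψ : AddChar F ℂ}
    (hψ : ψ ≠ 1) (s : ℕ) :
    ∑ X : Matrix ι ι F, ψ X.trace * qDescFactorial (Fintype.card F) (Fintype.card ι - X.rank) s
      = if s = Fintype.card ι
        then qDescFactorial (Fintype.card F) (Fintype.card ι) (Fintype.card ι) else 0 := by
  calc ∑ X : Matrix ι ι F, ψ X.trace * qDescFactorial (Fintype.card F) (Fintype.card ι - X.rank) s
      = ∑ X : Matrix ι ι F,
          ∑ v : Fin s → ι → F with LinearIndependent F v ∧ ∀ j, X *ᵥ v j = 0, ψ X.trace := by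
        refine sum_congr rfl fun X _ => ?_
        rw [sum_const, nsmul_eq_mul, mul_comm, ← X.finrank_ker_mulVecLin,
          ← natCast_card_linearIndependent_mem]
        simp only [LinearMap.mem_ker, Matrix.mulVecLin_apply]
    _ = ∑ v : Fin s → ι → F with LinearIndependent F v,
          ∑ X with X ∈ matricesVanishingOn (Submodule.span F (Set.range v)), ψ X.trace :=
        sum_comm' fun X v => by simp [mem_matricesVanishingOn_span_range, and_comm]
    _ = ∑ v : Fin s → ι → F with LinearIndependent F v, if s = Fintype.card ι then 1 else 0 := by
        refine sum_congr rfl fun v hv => ?_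
        have h := (mem_filter.1 hv).2.span_range_eq_top_iff
        rw [Fintype.card_fin, Module.finrank_fintype_fun_eq_card] at h
        rw [sum_addChar_trace_matricesVanishingOn hψ]
        exact if_congr h rfl rfl
    _ = _ := by
        rw [sum_const, nsmul_eq_mul]
        split_ifs with hs
        · subst hs
          have h := natCast_card_linearIndependent_mem (⊤ : Submodule F (ι → F)) (Fintype.card ι)
          rw [finrank_top, Module.finrank_fintype_fun_eq_card] at h
          simpa only [mul_one, Submodule.mem_top, implies_true, and_true] using h
        · rw [mul_zero]

end Matrix

/-- Prasad's summation (equation (3.28)): for a nontrivial additive character `ψ₀` of a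
finite field `F` with `q` elements,
`∑_{X ∈ M_n(F)} \overline{ψ₀}(tr X)·(q;q)_{2n−1−rk X} = (−1)^n·q^{n²}·q^{n(n−1)/2}·(q;q)_{n−1}`. -/
theorem stmt_13 (F : Type) [Field F] [Fintype F]
    (q : ℕ) (hq : Fintype.card F = q) (n : ℕ) (hn : 1 ≤ n)
    (ψ : AddChar F ℂ) (hψ : ψ ≠ 1) :
    ∑ X : Matrix (Fin n) (Fin n) F,
        (starRingEnd ℂ) (ψ X.trace) * qPochC (q : ℂ) (2 * n - 1 - X.rank)
      = (-1) ^ n * (q : ℂ) ^ (n ^ 2) * (q : ℂ) ^ (n * (n - 1) / 2) *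
          qPochC (q : ℂ) (n - 1) := by
  subst hq
  have hq : ∀ k, (Fintype.card F : ℂ) ^ (k + 1) ≠ 1 := fun k => by
    exact_mod_cast (Nat.one_lt_pow k.succ_ne_zero Fintype.one_lt_card).ne'
  have hchar : 0 < ringChar F := Nat.pos_of_ne_zero (CharP.ringChar_ne_zero_of_finite F)
  have hexpand : ∀ X : Matrix (Fin n) (Fin n) F,
      qPochC (Fintype.card F) (2 * n - 1 - X.rank) = qPochC (Fintype.card F) (n - 1) *
        ∑ s ∈ range (n + 1), ((Fintype.card F : ℂ) ^ n) ^ s *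
          qDescFactorial (Fintype.card F) (n - X.rank) s / qPochC (Fintype.card F) s := fun X => by
    rw [show 2 * n - 1 - X.rank = n - 1 + (n - X.rank) by have := X.rank_le_width; omega,
      qPochC_add_eq_sum hq _ (Nat.sub_le n X.rank), Nat.sub_add_cancel hn]
  calc ∑ X : Matrix (Fin n) (Fin n) F,
        (starRingEnd ℂ) (ψ X.trace) * qPochC (Fintype.card F) (2 * n - 1 - X.rank)
      = qPochC (Fintype.card F) (n - 1) * ∑ s ∈ range (n + 1),
          ((Fintype.card F : ℂ) ^ n) ^ s / qPochC (Fintype.card F) s *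
            ∑ X : Matrix (Fin n) (Fin n) F,
              ψ⁻¹ X.trace * qDescFactorial (Fintype.card F) (n - X.rank) s := by
        simp only [AddChar.starComp_apply hchar, hexpand, mul_sum]
        rw [sum_comm]
        exact sum_congr rfl fun s _ => sum_congr rfl fun X _ => by ring
    _ = _ := by
        have hsum := sum_addChar_trace_mul_qDescFactorial (ι := Fin n) (inv_ne_one.2 hψ)
        simp only [Fintype.card_fin] at hsum
        simp only [hsum, mul_ite, mul_zero, sum_ite_eq', mem_range, Nat.lt_succ_self, if_true,
          qDescFactorial_self]
        field_simp [qPochC_ne_zero hq n]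
        ring
end
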